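/- arXiv:1806.06884 — 2 statements merged into one kernel-verified Lean document; each statement's English description precedes it below -/
import Mathlib

section
/- Let n ≥ 2 and let z_1, …, z_n be real numbers with z_1 + z_2 + ⋯ + z_n = 0. Suppose that every proper partial sum is negative, i.e. v_k := z_1 + ⋯ + z_k < 0 for all 1 ≤ k ≤ n−1. Then ∑_{k=1}^{n-1} (k(n−k)/2)·exp(z_{k+1} − z_k) > n(n²−1)/12. -/
/-!
Write `v k = z 1 + ⋯ + z k` and `r k = k (n - k) / 2`, so that `z (k+1) - z k` is the second
difference of `v`, while `r` vanishes at `0` and `n` and has constant second difference `-1`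
(the Cartan-matrix system `2 r k - r (k-1) - r (k+1) = 1` behind the principal `sl(2)`).
Bounding `exp x ≥ 1 + x` termwise, the linear part `∑ r k (z (k+1) - z k)` becomes, after two
summations by parts, `-∑ v k > 0`, and what is left is `∑ r k = n (n² - 1) / 12`.
-/

open Finset

/-- Only meaningful for `k ≥ 1`: at `k = 0` the truncated `k - 1` is `0`. -/
def secondDiff (f : ℕ → ℝ) (k : ℕ) : ℝ := f (k + 1) - 2 * f k + f (k - 1)

theorem sum_Ico_mul_secondDiff_comm {r v : ℕ → ℝ} {n : ℕ} (hr₀ : r 0 = 0) (hrₙ : r n = 0)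
    (hv₀ : v 0 = 0) (hvₙ : v n = 0) :
    ∑ k ∈ Ico 1 n, r k * secondDiff v k = ∑ k ∈ Ico 1 n, v k * secondDiff r k := by
  rcases Nat.eq_zero_or_pos n with rfl | hn
  · simp
  let wronskian : ℕ → ℝ := fun k => r (k - 1) * v k - v (k - 1) * r k
  have htelescope : ∀ k ∈ Ico 1 n,
      r k * secondDiff v k - v k * secondDiff r k = wronskian (k + 1) - wronskian k := by
    intro k _
    simp only [wronskian, secondDiff, Nat.add_sub_cancel]
    ring
  rw [← sub_eq_zero, ← sum_sub_distrib, sum_congr rfl htelescope, sum_Ico_sub wronskian hn]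
  obtain ⟨m, rfl⟩ : ∃ m, n = m + 1 := ⟨n - 1, by omega⟩
  simp [wronskian, hr₀, hrₙ, hv₀, hvₙ]

theorem secondDiff_partialSum (z : ℕ → ℝ) {k : ℕ} (hk : 1 ≤ k) :
    secondDiff (fun j => ∑ l ∈ Icc 1 j, z l) k = z (k + 1) - z k := by
  obtain ⟨j, rfl⟩ : ∃ j, k = j + 1 := ⟨k - 1, by omega⟩
  simp only [secondDiff, Nat.add_sub_cancel, sum_Icc_succ_top (Nat.le_add_left 1 _)]
  ring

theorem secondDiff_mul_sub (c : ℝ) {k : ℕ} (hk : 1 ≤ k) :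
    secondDiff (fun j => (j : ℝ) * (c - j) / 2) k = -1 := by
  simp only [secondDiff, Nat.cast_add, Nat.cast_one, Nat.cast_sub hk]
  ring

theorem sum_range_mul_sub (c : ℝ) (m : ℕ) :
    ∑ k ∈ range m, (k : ℝ) * (c - k) = m * (m - 1) * (3 * c - 2 * m + 1) / 6 := by
  induction m with
  | zero => simp
  | succ m ih => rw [sum_range_succ, ih]; push_cast; ring

theorem sum_Ico_mul_sub_div_two (n : ℕ) :
    ∑ k ∈ Ico 1 n, (k : ℝ) * (n - k) / 2 = n * (n ^ 2 - 1) / 12 := by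
  rcases Nat.eq_zero_or_pos n with rfl | hn
  · simp
  have hrange := sum_range_mul_sub n n
  rw [range_eq_Ico, sum_eq_sum_Ico_succ_bot hn, Nat.cast_zero, zero_mul, zero_add] at hrange
  rw [← sum_div, hrange]
  ring

theorem sum_mul_one_add_le_sum_mul_exp {ι : Type*} (s : Finset ι) {w : ι → ℝ}
    (hw : ∀ i ∈ s, 0 ≤ w i) (x : ι → ℝ) :
    ∑ i ∈ s, w i * (1 + x i) ≤ ∑ i ∈ s, w i * Real.exp (x i) :=
  sum_le_sum fun i hi =>
    mul_le_mul_of_nonneg_left (by linarith [Real.add_one_le_exp (x i)]) (hw i hi)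

/-- Core quantitative inequality (strict version) in the proof of the main theorem:
if `z 1 + ⋯ + z n = 0` and all proper partial sums are negative, then the weighted
sum of exponentials of consecutive differences strictly exceeds `n(n²-1)/12`. -/
theorem stmt_0 (n : ℕ) (hn : 2 ≤ n) (z : ℕ → ℝ)
    (hsum : ∑ k ∈ Finset.Icc 1 n, z k = 0)
    (hneg : ∀ k, 1 ≤ k → k ≤ n - 1 → ∑ l ∈ Finset.Icc 1 k, z l < 0) :
    ∑ k ∈ Finset.Icc 1 (n - 1),
        ((k : ℝ) * ((n : ℝ) - (k : ℝ)) / 2) * Real.exp (z (k + 1) - z k)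
      > (n : ℝ) * ((n : ℝ) ^ 2 - 1) / 12 := by
  set v : ℕ → ℝ := fun k => ∑ l ∈ Icc 1 k, z l
  set r : ℕ → ℝ := fun k => (k : ℝ) * (n - k) / 2
  have hlinear : ∑ k ∈ Ico 1 n, r k * (z (k + 1) - z k) = -∑ k ∈ Ico 1 n, v k := calc
    _ = ∑ k ∈ Ico 1 n, r k * secondDiff v k :=
      sum_congr rfl fun k hk => by rw [secondDiff_partialSum z (mem_Ico.1 hk).1]
    _ = ∑ k ∈ Ico 1 n, v k * secondDiff r k :=
      sum_Ico_mul_secondDiff_comm (by simp [r]) (by simp [r]) (by simp [v]) hsum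
    _ = -∑ k ∈ Ico 1 n, v k := by
      rw [← sum_neg_distrib]
      exact sum_congr rfl fun k hk => by rw [secondDiff_mul_sub _ (mem_Ico.1 hk).1, mul_neg_one]
  have hv : ∑ k ∈ Ico 1 n, v k < 0 :=
    sum_neg (fun k hk => hneg k (mem_Ico.1 hk).1 (by have := (mem_Ico.1 hk).2; omega))
      ⟨1, mem_Ico.2 ⟨le_rfl, hn⟩⟩
  rw [Icc_sub_one_right_eq_Ico_of_not_isMin (by simp only [isMin_iff_eq_bot, Nat.bot_eq_zero]; omega), gt_iff_lt]
  calc (n : ℝ) * ((n : ℝ) ^ 2 - 1) / 12 = ∑ k ∈ Ico 1 n, r k := (sum_Ico_mul_sub_div_two n).symm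
    _ < ∑ k ∈ Ico 1 n, r k * (1 + (z (k + 1) - z k)) := by
      simp only [mul_one_add, sum_add_distrib, hlinear]
      linarith
    _ ≤ _ := sum_mul_one_add_le_sum_mul_exp _
      (fun k hk => div_nonneg (mul_nonneg k.cast_nonneg
        (sub_nonneg.2 (by exact_mod_cast (mem_Ico.1 hk).2.le))) zero_le_two) _
end

section
/- Let n ≥ 2 and let z_1, …, z_n be real numbers with z_1 + z_2 + ⋯ + z_n = 0. Suppose that v_k := z_1 + ⋯ + z_k ≤ 0 for all 1 ≤ k ≤ n−1. Then ∑_{k=1}^{n-1} (k(n−k)/2)·exp(z_{k+1} − z_k) ≥ n(n²−1)/12. -/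
/-!
Since `exp x ≥ 1 + x` and the weights `r_k = k (n - k) / 2` are nonnegative, the sum is at least
`∑ r_k + ∑ r_k (z_{k+1} - z_k)`. The first sum is `n (n² - 1) / 12`. As `r_0 = r_n = 0` and `r` has
constant second difference `-1`, summation by parts turns the second sum, in terms of the partial
sums `v_k = z_1 + ⋯ + z_k`, into `(n - 1) / 2 · v_n - ∑_{k < n} v_k = -∑_{k < n} v_k ≥ 0`.
-/

open Finset

lemma sum_Icc_natCast_mul_sub (z : ℕ → ℝ) (m : ℕ) :
    ∑ k ∈ Icc 1 m, (k : ℝ) * (z (k + 1) - z k) = m * z (m + 1) - ∑ k ∈ Icc 1 m, z k := by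
  induction m with
  | zero => simp
  | succ m ih =>
    rw [sum_Icc_succ_top (by omega), sum_Icc_succ_top (by omega) z, ih]
    push_cast; ring

lemma sum_Icc_natCast (m : ℕ) : ∑ k ∈ Icc 1 m, (k : ℝ) = m * (m + 1) / 2 := by
  induction m with
  | zero => simp
  | succ m ih =>
    rw [sum_Icc_succ_top (by omega), ih]
    push_cast; ring

lemma tent_succ (m k : ℕ) :
    (k : ℝ) * ((m + 1 : ℕ) + 1 - k) / 2 = k * (m + 1 - k) / 2 + k / 2 := by
  push_cast; ring

lemma sum_Icc_tent (m : ℕ) :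
    ∑ k ∈ Icc 1 m, (k : ℝ) * (m + 1 - k) / 2 = (m + 1) * ((m + 1) ^ 2 - 1) / 12 := by
  induction m with
  | zero => simp
  | succ m ih =>
    rw [sum_Icc_succ_top (by omega)]
    simp only [tent_succ, sum_add_distrib, ← sum_div, ih, sum_Icc_natCast]
    push_cast; ring

lemma sum_Icc_tent_mul_sub (z : ℕ → ℝ) (m : ℕ) :
    ∑ k ∈ Icc 1 m, (k : ℝ) * (m + 1 - k) / 2 * (z (k + 1) - z k) =
      m / 2 * ∑ k ∈ Icc 1 (m + 1), z k - ∑ k ∈ Icc 1 m, ∑ l ∈ Icc 1 k, z l := by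
  induction m with
  | zero => simp
  | succ m ih =>
    have hstep : ∀ k ∈ Icc 1 m, (k : ℝ) * ((m + 1 : ℕ) + 1 - k) / 2 * (z (k + 1) - z k) =
        k * (m + 1 - k) / 2 * (z (k + 1) - z k) + k * (z (k + 1) - z k) / 2 := fun k _ => by
      rw [tent_succ]; ring
    rw [sum_Icc_succ_top (by omega), sum_congr rfl hstep, sum_add_distrib, ih, ← sum_div,
      sum_Icc_natCast_mul_sub]
    rw [sum_Icc_succ_top (by omega : 1 ≤ m + 1) (fun k => ∑ l ∈ Icc 1 k, z l),
      sum_Icc_succ_top (by omega : 1 ≤ m + 2) z, sum_Icc_succ_top (by omega : 1 ≤ m + 1) z]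
    push_cast; ring

lemma sum_mul_add_one_le_sum_mul_exp {ι : Type*} (s : Finset ι) (r d : ι → ℝ)
    (hr : ∀ i ∈ s, 0 ≤ r i) : ∑ i ∈ s, r i * (d i + 1) ≤ ∑ i ∈ s, r i * Real.exp (d i) :=
  sum_le_sum fun i hi => mul_le_mul_of_nonneg_left (Real.add_one_le_exp _) (hr i hi)

theorem stmt_1_general (n : ℕ) (z : ℕ → ℝ)
    (hsum : ∑ k ∈ Finset.Icc 1 n, z k = 0)
    (hneg : ∀ k, 1 ≤ k → k ≤ n - 1 → ∑ l ∈ Finset.Icc 1 k, z l ≤ 0) :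
    ∑ k ∈ Finset.Icc 1 (n - 1),
        ((k : ℝ) * ((n : ℝ) - (k : ℝ)) / 2) * Real.exp (z (k + 1) - z k)
      ≥ (n : ℝ) * ((n : ℝ) ^ 2 - 1) / 12 := by
  cases n with
  | zero => simp
  | succ m =>
    simp only [Nat.add_sub_cancel] at hneg ⊢
    push_cast
    have hlin : 0 ≤ ∑ k ∈ Icc 1 m, (k : ℝ) * (m + 1 - k) / 2 * (z (k + 1) - z k) := by
      rw [sum_Icc_tent_mul_sub, hsum, mul_zero, zero_sub, neg_nonneg]
      exact sum_nonpos fun k hk => hneg k (mem_Icc.1 hk).1 (mem_Icc.1 hk).2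
    have htent : ∀ k ∈ Icc 1 m, 0 ≤ (k : ℝ) * (m + 1 - k) / 2 := fun k hk => by
      have : (k : ℝ) ≤ m := by exact_mod_cast (mem_Icc.1 hk).2
      exact div_nonneg (mul_nonneg k.cast_nonneg (by linarith)) zero_le_two
    calc (m + 1 : ℝ) * ((m + 1) ^ 2 - 1) / 12
        = ∑ k ∈ Icc 1 m, (k : ℝ) * (m + 1 - k) / 2 := (sum_Icc_tent m).symm
      _ ≤ ∑ k ∈ Icc 1 m, (k : ℝ) * (m + 1 - k) / 2 * ((z (k + 1) - z k) + 1) := by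
        simp only [mul_add, mul_one, sum_add_distrib]
        linarith
      _ ≤ _ := sum_mul_add_one_le_sum_mul_exp _ _ _ htent

/-- Core quantitative inequality (non-strict version): if `z 1 + ⋯ + z n = 0` and all
proper partial sums are nonpositive, then the weighted sum of exponentials of
consecutive differences is at least `n(n²-1)/12`. -/
theorem stmt_1 (n : ℕ) (hn : 2 ≤ n) (z : ℕ → ℝ)
    (hsum : ∑ k ∈ Finset.Icc 1 n, z k = 0)
    (hneg : ∀ k, 1 ≤ k → k ≤ n - 1 → ∑ l ∈ Finset.Icc 1 k, z l ≤ 0) :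
    ∑ k ∈ Finset.Icc 1 (n - 1),
        ((k : ℝ) * ((n : ℝ) - (k : ℝ)) / 2) * Real.exp (z (k + 1) - z k)
      ≥ (n : ℝ) * ((n : ℝ) ^ 2 - 1) / 12 :=
  stmt_1_general n z hsum hneg
end
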